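/- arXiv:2005.09193 — 3 statements merged into one kernel-verified Lean document; each statement's English description precedes it below -/
import Mathlib

section
/- Let γ be a smooth Jordan curve in ℂ, L = l(γ × γ) where l(z,w) = ((z+w)/2,(z−w)/2), and for φ ∈ (0, π/2] let L_φ = R_φ(L) where R_φ(z,w) = (z, e^{iφ}w). Then L ∩ (ℂ × {0}) = L_φ ∩ (ℂ × {0}) = γ × {0}, and L and L_φ intersect cleanly along γ × {0}: at each point p ∈ γ × {0}, T_p L ∩ T_p L_φ = T_p(γ × {0}). -/
open Complex Real Set Filter Topology

theorem mem_tangentCone_of_hasDerivAt {E : Type*} [NormedAddCommGroup E] [NormedSpace ℝ E]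
    {s : Set E} {c : ℝ → E} {v : E} (hc : HasDerivAt c v 0) (hs : ∀ t, c t ∈ s) :
    v ∈ tangentConeAt ℝ s (c 0) := by
  have htend : Tendsto (fun n : ℕ => ((n : ℝ) + 1)⁻¹) atTop (𝓝[≠] (0:ℝ)) := by
    refine tendsto_nhdsWithin_iff.2 ⟨?_, ?_⟩
    · simpa using tendsto_one_div_add_atTop_nhds_zero_nat (𝕜 := ℝ)
    · filter_upwards with n
      exact inv_ne_zero (by positivity)
  refine mem_tangentConeAt_iff_exists_seq_norm_tendsto_atTop.2 ⟨fun n => (n : ℝ) + 1, fun n => c (((n : ℝ) + 1)⁻¹) - c 0, ?_, ?_, ?_⟩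
  pick_goal 2
  · filter_upwards with n; simpa using hs _
  · simp only [Real.norm_eq_abs]
    refine Tendsto.comp tendsto_abs_atTop_atTop ?_
    exact tendsto_atTop_add_const_right _ 1 tendsto_natCast_atTop_atTop
  · have h := (hasDerivAt_iff_tendsto_slope.1 hc).comp htend
    have : ∀ n : ℕ, slope c 0 (((n : ℝ) + 1)⁻¹) = ((n:ℝ)+1) • (c (((n : ℝ) + 1)⁻¹) - c 0) := by
      intro n
      rw [slope_def_module]
      simp [inv_inv]
    refine h.congr fun n => ?_
    simp only [Function.comp_apply]
    rw [this]

theorem tangentCone_eq_of_chart {E F₁ F₂ : Type*}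
    [NormedAddCommGroup E] [NormedSpace ℝ E]
    [NormedAddCommGroup F₁] [NormedSpace ℝ F₁] [CompleteSpace F₁]
    [NormedAddCommGroup F₂] [NormedSpace ℝ F₂] [CompleteSpace F₂]
    (Φ : F₁ × F₂ → E) (A : (F₁ × F₂) ≃L[ℝ] E)
    (hΦ : HasStrictFDerivAt Φ (A : (F₁ × F₂) →L[ℝ] E) 0)
    (s : Set E)
    (hsup : ∀ x : F₁, Φ (x, 0) ∈ s)
    (hloc : ∀ δ > 0, ∀ᶠ z in 𝓝[s] (Φ 0), ∃ x : F₁, ‖x‖ < δ ∧ z = Φ (x, 0)) :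
    tangentConeAt ℝ s (Φ 0) = (fun x : F₁ => A (x, 0)) '' Set.univ := by
  apply Set.Subset.antisymm
  · intro v hv
    set ψ := hΦ.localInverse Φ A 0 with hψdef
    have hinv : ∀ᶠ w in 𝓝 (0 : F₁ × F₂), ψ (Φ w) = w := hΦ.eventually_left_inverse
    obtain ⟨ε, εpos, hε⟩ := Metric.eventually_nhds_iff.1 hinv
    have hF0 : ∀ᶠ z in 𝓝[s] (Φ 0), (ψ z).2 = 0 := by
      filter_upwards [hloc ε εpos] with z hz
      obtain ⟨x, hx, rfl⟩ := hz
      have : dist ((x, (0:F₂))) (0 : F₁ × F₂) < ε := by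
        rw [dist_zero_right, Prod.norm_def]
        simpa [max_eq_left (norm_nonneg x)] using hx
      rw [hε this]
    obtain ⟨cc, d, hcnorm, hdmem, hcd⟩ := mem_tangentConeAt_iff_exists_seq_norm_tendsto_atTop.1 hv
    have hd0 : Tendsto d atTop (𝓝 0) := tangentConeAt.lim_zero atTop hcnorm hcd
    have htend : Tendsto (fun n => Φ 0 + d n) atTop (𝓝 (Φ 0)) := by
      simpa using tendsto_const_nhds.add hd0
    have hF0' := eventually_nhdsWithin_iff.1 hF0
    have hev : ∀ᶠ n in atTop, (ψ (Φ 0 + d n)).2 = 0 := by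
      filter_upwards [htend.eventually hF0', hdmem] with n h1 h2
      exact h1 h2
    have hψF : HasFDerivAt ψ (A.symm : E →L[ℝ] (F₁ × F₂)) (Φ 0) :=
      hΦ.to_localInverse.hasFDerivAt
    have hFd : HasFDerivWithinAt (fun z => (ψ z).2)
        ((ContinuousLinearMap.snd ℝ F₁ F₂).comp (A.symm : E →L[ℝ] (F₁ × F₂))) s (Φ 0) :=
      (((ContinuousLinearMap.snd ℝ F₁ F₂).hasFDerivAt).comp _ hψF).hasFDerivWithinAt
    have hlim := hFd.lim hd0 hdmem hcd
    have hψ0 : ψ (Φ 0) = 0 := hΦ.localInverse_apply_image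
    have hzero : Tendsto (fun n => cc n • ((ψ (Φ 0 + d n)).2 - (ψ (Φ 0)).2)) atTop
        (𝓝 (0 : F₂)) := by
      have : (fun n => cc n • ((ψ (Φ 0 + d n)).2 - (ψ (Φ 0)).2)) =ᶠ[atTop] fun _ => 0 := by
        filter_upwards [hev] with n hn
        rw [hn, hψ0]
        simp
      exact Tendsto.congr' this.symm tendsto_const_nhds
    have h2 : (A.symm v).2 = 0 := tendsto_nhds_unique hlim hzero
    refine ⟨(A.symm v).1, trivial, ?_⟩
    have : ((A.symm v).1, (0:F₂)) = A.symm v := by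
      rw [← h2]
    show A ((A.symm v).1, (0:F₂)) = v
    rw [this, A.apply_symm_apply]
  · rintro _ ⟨x, -, rfl⟩
    have inner : HasDerivAt (fun τ : ℝ => τ • ((x, (0:F₂)) : F₁ × F₂)) ((x, (0:F₂))) 0 := by
      simpa using (hasDerivAt_id (0:ℝ)).smul_const ((x, (0:F₂)) : F₁ × F₂)
    have hcurve : HasDerivAt (fun τ : ℝ => Φ (τ • (x, (0:F₂)))) (A (x, 0)) 0 := by
      have h0 : ((0:ℝ) • ((x, (0:F₂)) : F₁ × F₂)) = (0 : F₁ × F₂) := by simp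
      have := HasFDerivAt.comp_hasDerivAt (0:ℝ) (h0 ▸ hΦ.hasFDerivAt) inner
      simpa [Function.comp_def] using this
    have hmem := mem_tangentCone_of_hasDerivAt hcurve (fun t => by
      simpa [Prod.smul_mk, smul_zero] using hsup (t • x))
    simpa using hmem

theorem gamma_inj_mod (γ : ℝ → ℂ) (hper : Function.Periodic γ (2*π))
    (hinj : Set.InjOn γ (Set.Ico 0 (2*π))) {a b : ℝ} (h : γ a = γ b) :
    ∃ n : ℤ, a - b = n * (2*π) := by
  have h2π : (0:ℝ) < 2*π := by positivity
  have ha' : γ (toIcoMod h2π 0 a) = γ a := by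
    rw [toIcoMod]; exact hper.sub_zsmul_eq _
  have hb' : γ (toIcoMod h2π 0 b) = γ b := by
    rw [toIcoMod]; exact hper.sub_zsmul_eq _
  have hIa := toIcoMod_mem_Ico' h2π a
  have hIb := toIcoMod_mem_Ico' h2π b
  have heq : toIcoMod h2π 0 a = toIcoMod h2π 0 b :=
    hinj hIa hIb (by rw [ha', hb', h])
  refine ⟨toIcoDiv h2π 0 a - toIcoDiv h2π 0 b, ?_⟩
  rw [toIcoMod, toIcoMod] at heq
  push_cast [zsmul_eq_mul] at heq ⊢
  linear_combination heq

theorem gamma_local (γ : ℝ → ℂ) (hcont : Continuous γ)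
    (hper : Function.Periodic γ (2*π)) (hinj : Set.InjOn γ (Set.Ico 0 (2*π)))
    (t₀ : ℝ) :
    ∀ δ > 0, ∀ᶠ z in 𝓝[Set.range γ] (γ t₀), ∃ x : ℝ, ‖x‖ < δ ∧ z = γ (t₀ + x) := by
  intro δ hδ
  have h2π : (0:ℝ) < 2*π := by positivity
  set δ' := min δ π with hδ'def
  have hδ'pos : 0 < δ' := lt_min hδ Real.pi_pos
  have hδ'le : δ' ≤ δ := min_le_left _ _
  have hδ'π : δ' ≤ π := min_le_right _ _
  set S := γ '' (Set.Icc (t₀ + δ' - 2*π) (t₀ - δ')) with hSdef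
  have hScl : IsClosed S := (isCompact_Icc.image hcont).isClosed
  have hnot : γ t₀ ∉ S := by
    rintro ⟨s, hs, hgs⟩
    obtain ⟨n, hn⟩ := gamma_inj_mod γ hper hinj hgs
    have h1 : (n : ℝ) * (2*π) ≤ -δ' := by rw [← hn]; linarith [hs.2]
    have h2 : -(2*π) < (n:ℝ) * (2*π) := by
      rw [← hn]; nlinarith [hs.1, Real.pi_pos]
    have hn0 : (n:ℝ) < 0 := by nlinarith
    have hn1 : (-1:ℝ) < (n:ℝ) := by nlinarith
    have : (n:ℤ) < 0 := by exact_mod_cast hn0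
    have : (-1:ℤ) < n := by exact_mod_cast hn1
    omega
  have hU : Sᶜ ∈ 𝓝[Set.range γ] (γ t₀) :=
    nhdsWithin_le_nhds (hScl.isOpen_compl.mem_nhds hnot)
  filter_upwards [hU, self_mem_nhdsWithin] with z hz hzr
  obtain ⟨s, rfl⟩ := hzr
  have hγs' : γ (toIcoMod h2π (t₀ + δ' - 2*π) s) = γ s := by
    rw [toIcoMod]; exact hper.sub_zsmul_eq _
  have hI := toIcoMod_mem_Ico h2π (t₀ + δ' - 2*π) s
  have hup : toIcoMod h2π (t₀ + δ' - 2*π) s < t₀ + δ' := by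
    have := hI.2; linarith
  have hlow : t₀ - δ' < toIcoMod h2π (t₀ + δ' - 2*π) s := by
    by_contra hcon
    push_neg at hcon
    exact hz ⟨toIcoMod h2π (t₀ + δ' - 2*π) s, ⟨hI.1, hcon⟩, hγs'⟩
  refine ⟨toIcoMod h2π (t₀ + δ' - 2*π) s - t₀, ?_, ?_⟩
  · rw [Real.norm_eq_abs, abs_lt]
    constructor <;> linarith
  · rw [add_sub_cancel, hγs']

noncomputable section

/-- multiplication by a nonzero complex number, as a real CLE -/
def mulCLE (D : ℂ) (hD : D ≠ 0) : ℂ ≃L[ℝ] ℂ :=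
  LinearEquiv.toContinuousLinearEquiv
  { toFun := fun z => D * z
    invFun := fun z => D⁻¹ * z
    map_add' := mul_add D
    map_smul' := fun r z => by simp [Complex.real_smul]; ring
    left_inv := fun z => by field_simp
    right_inv := fun z => by field_simp }

@[simp] lemma mulCLE_apply (D : ℂ) (hD : D ≠ 0) (z : ℂ) : mulCLE D hD z = D * z := rfl

/-- the map (z,w) ↦ ((z+w)/2, (z-w)/2) as a real CLE -/
def lCLE : (ℂ × ℂ) ≃L[ℝ] (ℂ × ℂ) :=
  LinearEquiv.toContinuousLinearEquiv
  { toFun := fun p => ((p.1 + p.2)/2, (p.1 - p.2)/2)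
    invFun := fun p => (p.1 + p.2, p.1 - p.2)
    map_add' := fun p q => by simp only [Prod.ext_iff, Prod.fst_add, Prod.snd_add]; constructor <;> ring
    map_smul' := fun r p => by
      simp [Prod.ext_iff, Complex.real_smul]
      constructor <;> ring
    left_inv := fun p => by simp only [Prod.ext_iff]; constructor <;> ring
    right_inv := fun p => by simp only [Prod.ext_iff]; constructor <;> ring }

@[simp] lemma lCLE_apply (p : ℂ × ℂ) : lCLE p = ((p.1 + p.2)/2, (p.1 - p.2)/2) := rfl

def rCLE (e : ℂ) (he : e ≠ 0) : (ℂ × ℂ) ≃L[ℝ] (ℂ × ℂ) :=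
  (ContinuousLinearEquiv.refl ℝ ℂ).prodCongr (mulCLE e he)

@[simp] lemma rCLE_apply (e : ℂ) (he : e ≠ 0) (p : ℂ × ℂ) :
    rCLE e he p = (p.1, e * p.2) := rfl

/-- tubular chart derivative: (t,s) ↦ t•D + s•(I*D) -/
def tubEquiv (D : ℂ) (hD : D ≠ 0) : (ℝ × ℝ) ≃L[ℝ] ℂ :=
  LinearEquiv.toContinuousLinearEquiv
  { toFun := fun p => p.1 • D + p.2 • (Complex.I * D)
    invFun := fun z => ((z / D).re, (z / D).im)
    map_add' := fun p q => by simp [add_smul]; ring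
    map_smul' := fun r p => by
      simp only [Prod.smul_fst, Prod.smul_snd, smul_eq_mul, Complex.real_smul, smul_add,
        RingHom.id_apply]
      push_cast; ring
    left_inv := fun p => by
      have hq : ((p.1 : ℂ) * D + (p.2 : ℂ) * (Complex.I * D)) / D
          = (p.1 : ℂ) + (p.2 : ℂ) * Complex.I := by
        field_simp
      simp only [Complex.real_smul]
      rw [hq]
      simp [Prod.ext_iff]
    right_inv := fun z => by
      simp only [Complex.real_smul]
      have : ((z / D).re : ℂ) + ((z / D).im : ℂ) * Complex.I = z / D := Complex.re_add_im _
      calc ((z / D).re : ℂ) * D + ((z / D).im : ℂ) * (Complex.I * D)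
          = (((z / D).re : ℂ) + ((z / D).im : ℂ) * Complex.I) * D := by ring
        _ = z := by rw [this]; field_simp }

@[simp] lemma tubEquiv_apply (D : ℂ) (hD : D ≠ 0) (p : ℝ × ℝ) :
    tubEquiv D hD p = p.1 • D + p.2 • (Complex.I * D) := rfl

/-- shuffle ((t,u),(s,v)) ↦ ((t,s),(u,v)) -/
def shuffleCLE : ((ℝ×ℝ)×(ℝ×ℝ)) ≃L[ℝ] ((ℝ×ℝ)×(ℝ×ℝ)) :=
  LinearEquiv.toContinuousLinearEquiv
  { toFun := fun w => ((w.1.1, w.2.1), (w.1.2, w.2.2))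
    invFun := fun w => ((w.1.1, w.2.1), (w.1.2, w.2.2))
    map_add' := fun p q => rfl
    map_smul' := fun r p => rfl
    left_inv := fun p => rfl
    right_inv := fun p => rfl }

@[simp] lemma shuffleCLE_apply (w : (ℝ×ℝ)×(ℝ×ℝ)) :
    shuffleCLE w = ((w.1.1, w.2.1), (w.1.2, w.2.2)) := rfl

def assocCLE : (ℝ × (ℝ × ℂ)) ≃L[ℝ] ((ℝ × ℝ) × ℂ) :=
  LinearEquiv.toContinuousLinearEquiv
  { toFun := fun w => ((w.1, w.2.1), w.2.2)
    invFun := fun w => (w.1.1, (w.1.2, w.2))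
    map_add' := fun p q => rfl
    map_smul' := fun r p => rfl
    left_inv := fun p => rfl
    right_inv := fun p => rfl }

@[simp] lemma assocCLE_apply (w : ℝ × (ℝ × ℂ)) : assocCLE w = ((w.1, w.2.1), w.2.2) := rfl

end
theorem hasStrict_g (γ : ℝ → ℂ) (hsm : ContDiff ℝ (⊤ : ℕ∞) γ) (t₀ : ℝ)
    (hD : deriv γ t₀ ≠ 0) :
    HasStrictFDerivAt (fun p : ℝ × ℝ => γ (t₀ + p.1) + p.2 • (Complex.I * deriv γ t₀))
      (tubEquiv (deriv γ t₀) hD : (ℝ × ℝ) →L[ℝ] ℂ) 0 := by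
  have h1 : HasStrictFDerivAt (fun p : ℝ × ℝ => t₀ + p.1)
      (ContinuousLinearMap.fst ℝ ℝ ℝ) 0 :=
    (ContinuousLinearMap.fst ℝ ℝ ℝ).hasStrictFDerivAt.const_add t₀
  have hγ : HasStrictDerivAt γ (deriv γ t₀) t₀ :=
    hsm.hasStrictDerivAt (by simp)
  have hγF : HasStrictFDerivAt γ
      ((ContinuousLinearMap.id ℝ ℝ).smulRight (deriv γ t₀)) (t₀ + (0:ℝ×ℝ).1) := by
    rw [hasStrictDerivAt_iff_hasStrictFDerivAt] at hγ
    simpa [ContinuousLinearMap.smulRight_id] using hγ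
  have h2 := hγF.comp (0 : ℝ×ℝ) h1
  have h3 : HasStrictFDerivAt (fun p : ℝ × ℝ => p.2 • (Complex.I * deriv γ t₀))
      ((ContinuousLinearMap.snd ℝ ℝ ℝ).smulRight (Complex.I * deriv γ t₀)) 0 :=
    ((ContinuousLinearMap.snd ℝ ℝ ℝ).smulRight (Complex.I * deriv γ t₀)).hasStrictFDerivAt
  have h4 := h2.add h3
  have heq : (((ContinuousLinearMap.id ℝ ℝ).smulRight (deriv γ t₀)).comp
        (ContinuousLinearMap.fst ℝ ℝ ℝ) +
      (ContinuousLinearMap.snd ℝ ℝ ℝ).smulRight (Complex.I * deriv γ t₀))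
      = (tubEquiv (deriv γ t₀) hD : (ℝ × ℝ) →L[ℝ] ℂ) := by
    refine ContinuousLinearMap.ext fun p => ?_
    simp
  rw [heq] at h4
  exact h4.congr_of_eventuallyEq (by filter_upwards with p; rfl)

theorem aux_prod (γ : ℝ → ℂ) (hsm : ContDiff ℝ (⊤ : ℕ∞) γ)
    (hper : Function.Periodic γ (2*π)) (hinj : Set.InjOn γ (Set.Ico 0 (2*π)))
    (t₀ : ℝ) (hD : deriv γ t₀ ≠ 0) (B : (ℂ × ℂ) ≃L[ℝ] (ℂ × ℂ)) :
    tangentConeAt ℝ (B '' (Set.range γ ×ˢ Set.range γ)) (B (γ t₀, γ t₀)) =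
      {v | ∃ a b : ℝ, v = B (a • deriv γ t₀, b • deriv γ t₀)} := by
  set D := deriv γ t₀ with hDdef
  set g : ℝ  ×  ℝ → ℂ := fun p => γ (t₀ + p.1) + p.2 • (Complex.I * D) with hgdef
  set Φ : ((ℝ × ℝ) × (ℝ × ℝ)) → ℂ × ℂ := fun w => B (g (w.1.1, w.2.1), g (w.1.2, w.2.2)) with hΦdef
  set A : ((ℝ × ℝ) × (ℝ × ℝ)) ≃L[ℝ] (ℂ × ℂ) :=
    shuffleCLE.trans (((tubEquiv D hD).prodCongr (tubEquiv D hD)).trans B) with hAdef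
  have hg : HasStrictFDerivAt g (tubEquiv D hD : (ℝ × ℝ) →L[ℝ] ℂ) 0 := hasStrict_g γ hsm t₀ hD
  have hg0 : g 0 = γ t₀ := by simp [hgdef]
  have hΦ0 : Φ 0 = B (γ t₀, γ t₀) := by
    show B (g ((0:ℝ × ℝ).1, (0:ℝ × ℝ).1), g ((0:ℝ × ℝ).2, (0:ℝ × ℝ).2)) = B (γ t₀, γ t₀)
    rw [show ((0:ℝ × ℝ).1, (0:ℝ × ℝ).1) = (0 : ℝ × ℝ) from rfl,
      show ((0:ℝ × ℝ).2, (0:ℝ × ℝ).2) = (0 : ℝ × ℝ) from rfl, hg0]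
  -- strict derivative of Φ
  have hstrict : HasStrictFDerivAt Φ (A : ((ℝ × ℝ) × (ℝ × ℝ)) →L[ℝ] (ℂ × ℂ)) 0 := by
    have hsh : HasStrictFDerivAt (fun w : (ℝ × ℝ) × (ℝ × ℝ) => shuffleCLE w)
        (shuffleCLE : ((ℝ × ℝ) × (ℝ × ℝ)) →L[ℝ] ((ℝ × ℝ) × (ℝ × ℝ))) 0 :=
      (shuffleCLE : ((ℝ × ℝ) × (ℝ × ℝ)) →L[ℝ] ((ℝ × ℝ) × (ℝ × ℝ))).hasStrictFDerivAt
    have hgg : HasStrictFDerivAt (fun q : (ℝ × ℝ) × (ℝ × ℝ) => (g q.1, g q.2))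
        (((tubEquiv D hD : (ℝ × ℝ) →L[ℝ] ℂ)).prodMap ((tubEquiv D hD : (ℝ × ℝ) →L[ℝ] ℂ)))
        (0 : (ℝ × ℝ) × (ℝ × ℝ)) := HasStrictFDerivAt.prodMap (p := (0 : (ℝ × ℝ) × (ℝ × ℝ))) hg hg
    have hBst : HasStrictFDerivAt (fun q : ℂ × ℂ => B q) (B : (ℂ × ℂ) →L[ℝ] (ℂ × ℂ)) (g 0, g 0) :=
      (B : (ℂ × ℂ) →L[ℝ] (ℂ × ℂ)).hasStrictFDerivAt
    have hsh0 : shuffleCLE (0 : (ℝ × ℝ) × (ℝ × ℝ)) = 0 := by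
      rw [shuffleCLE_apply]; rfl
    have hin := hBst.comp (0 : (ℝ × ℝ) × (ℝ × ℝ)) hgg
    rw [← hsh0] at hin
    have hcomp := hin.comp (0 : (ℝ × ℝ) × (ℝ × ℝ)) hsh
    have heq : ((B : (ℂ × ℂ) →L[ℝ] (ℂ × ℂ)).comp
          (((tubEquiv D hD : (ℝ × ℝ) →L[ℝ] ℂ)).prodMap ((tubEquiv D hD : (ℝ × ℝ) →L[ℝ] ℂ)))).comp
          (shuffleCLE : ((ℝ × ℝ) × (ℝ × ℝ)) →L[ℝ] ((ℝ × ℝ) × (ℝ × ℝ)))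
        = (A : ((ℝ × ℝ) × (ℝ × ℝ)) →L[ℝ] (ℂ × ℂ)) := by
      refine ContinuousLinearMap.ext fun w => ?_
      simp [hAdef]
    rw [heq] at hcomp
    exact hcomp.congr_of_eventuallyEq (by filter_upwards with w; simp [hΦdef])
  have hsup : ∀ x : ℝ × ℝ, Φ (x, 0) ∈ B '' (Set.range γ ×ˢ Set.range γ) := by
    intro x
    refine ⟨(γ (t₀ + x.1), γ (t₀ + x.2)), ⟨⟨x.1 + t₀, by rw [add_comm]⟩, ⟨x.2 + t₀, by rw [add_comm]⟩⟩, ?_⟩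
    simp [hΦdef, hgdef]
  have hloc : ∀ δ > 0, ∀ᶠ z in 𝓝[B '' (Set.range γ ×ˢ Set.range γ)] (Φ 0),
      ∃ x : ℝ × ℝ, ‖x‖ < δ ∧ z = Φ (x, 0) := by
    intro δ hδ
    rw [hΦ0]
    have hev := gamma_local γ hsm.continuous hper hinj t₀ δ hδ
    have hfst : Tendsto (fun z : ℂ × ℂ => (B.symm z).1)
        (𝓝[B '' (Set.range γ ×ˢ Set.range γ)] (B (γ t₀, γ t₀))) (𝓝[Set.range γ] (γ t₀)) := by
      rw [tendsto_nhdsWithin_iff]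
      constructor
      · have hc : ContinuousAt (fun z : ℂ × ℂ => (B.symm z).1) (B (γ t₀, γ t₀)) :=
          (continuous_fst.comp B.symm.continuous).continuousAt
        have := (hc.continuousWithinAt
          (s := B '' (Set.range γ ×ˢ Set.range γ))).tendsto
        simpa using this
      · filter_upwards [self_mem_nhdsWithin] with z hz
        obtain ⟨q, hq, rfl⟩ := hz
        simpa using hq.1
    have hsnd : Tendsto (fun z : ℂ × ℂ => (B.symm z).2)
        (𝓝[B '' (Set.range γ ×ˢ Set.range γ)] (B (γ t₀, γ t₀))) (𝓝[Set.range γ] (γ t₀)) := by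
      rw [tendsto_nhdsWithin_iff]
      constructor
      · have hc : ContinuousAt (fun z : ℂ × ℂ => (B.symm z).2) (B (γ t₀, γ t₀)) :=
          (continuous_snd.comp B.symm.continuous).continuousAt
        have := (hc.continuousWithinAt
          (s := B '' (Set.range γ ×ˢ Set.range γ))).tendsto
        simpa using this
      · filter_upwards [self_mem_nhdsWithin] with z hz
        obtain ⟨q, hq, rfl⟩ := hz
        simpa using hq.2
    filter_upwards [hfst.eventually hev, hsnd.eventually hev] with z h1 h2
    obtain ⟨x₁, hx₁, he₁⟩ := h1
    obtain ⟨x₂, hx₂, he₂⟩ := h2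
    refine ⟨(x₁, x₂), ?_, ?_⟩
    · rw [Prod.norm_def]
      exact max_lt hx₁ hx₂
    · have hBs : B.symm z = (γ (t₀+x₁), γ (t₀+x₂)) := Prod.ext he₁ he₂
      calc z = B (B.symm z) := (B.apply_symm_apply z).symm
        _ = Φ ((x₁,x₂), 0) := by rw [hBs]; simp [hΦdef, hgdef]
  have hres := tangentCone_eq_of_chart Φ A hstrict _ hsup hloc
  rw [hΦ0] at hres
  rw [hres]
  ext v
  constructor
  · rintro ⟨x, -, rfl⟩
    refine ⟨x.1, x.2, ?_⟩
    simp [hAdef]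
  · rintro ⟨a, b, rfl⟩
    refine ⟨(a, b), trivial, ?_⟩
    simp [hAdef]

theorem aux_diag (γ : ℝ → ℂ) (hsm : ContDiff ℝ (⊤ : ℕ∞) γ)
    (hper : Function.Periodic γ (2 * π)) (hinj : Set.InjOn γ (Set.Ico 0 (2 * π)))
    (t₀ : ℝ) (hD : deriv γ t₀ ≠ 0) :
    tangentConeAt ℝ (Set.range γ ×ˢ ({0} : Set ℂ)) (γ t₀, 0) =
      {v : ℂ × ℂ | ∃ a : ℝ, v = (a • deriv γ t₀, 0)} := by
  set D := deriv γ t₀ with hDdef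
  set g : ℝ × ℝ → ℂ := fun p => γ (t₀ + p.1) + p.2 • (Complex.I * D) with hgdef
  set mCLM : (ℝ × (ℝ × ℂ)) →L[ℝ] (ℝ × ℝ) :=
    (ContinuousLinearMap.fst ℝ ℝ (ℝ × ℂ)).prod
      ((ContinuousLinearMap.fst ℝ ℝ ℂ).comp (ContinuousLinearMap.snd ℝ ℝ (ℝ × ℂ))) with hmdef
  have hmapp : ∀ w : ℝ × (ℝ × ℂ), mCLM w = (w.1, w.2.1) := fun w => rfl
  set Φ : ℝ × (ℝ × ℂ) → ℂ × ℂ := fun w => (g (w.1, w.2.1), w.2.2) with hΦdef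
  set A : (ℝ × (ℝ × ℂ)) ≃L[ℝ] (ℂ × ℂ) :=
    assocCLE.trans ((tubEquiv D hD).prodCongr (ContinuousLinearEquiv.refl ℝ ℂ)) with hAdef
  have hg : HasStrictFDerivAt g (tubEquiv D hD : (ℝ × ℝ) →L[ℝ] ℂ) 0 := hasStrict_g γ hsm t₀ hD
  have hg0 : g 0 = γ t₀ := by simp [hgdef]
  have hΦ0 : Φ 0 = (γ t₀, 0) := by
    show (g ((0:ℝ × (ℝ × ℂ)).1, (0:ℝ × (ℝ × ℂ)).2.1), (0:ℝ × (ℝ × ℂ)).2.2) = _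
    rw [show ((0:ℝ × (ℝ × ℂ)).1, (0:ℝ × (ℝ × ℂ)).2.1) = (0 : ℝ × ℝ) from rfl, hg0]
    rfl
  have hstrict : HasStrictFDerivAt Φ (A : (ℝ × (ℝ × ℂ)) →L[ℝ] (ℂ × ℂ)) 0 := by
    rw [← map_zero mCLM] at hg
    have h1 := hg.comp (0 : ℝ × (ℝ × ℂ)) mCLM.hasStrictFDerivAt
    have h2 : HasStrictFDerivAt (fun w : ℝ × (ℝ × ℂ) => w.2.2)
        ((ContinuousLinearMap.snd ℝ ℝ ℂ).comp (ContinuousLinearMap.snd ℝ ℝ (ℝ × ℂ))) 0 :=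
      ((ContinuousLinearMap.snd ℝ ℝ ℂ).comp (ContinuousLinearMap.snd ℝ ℝ (ℝ × ℂ))).hasStrictFDerivAt
    have h3 := h1.prodMk h2
    have heq : (((tubEquiv D hD : (ℝ × ℝ) →L[ℝ] ℂ).comp mCLM).prod
        ((ContinuousLinearMap.snd ℝ ℝ ℂ).comp (ContinuousLinearMap.snd ℝ ℝ (ℝ × ℂ))))
        = (A : (ℝ × (ℝ × ℂ)) →L[ℝ] (ℂ × ℂ)) := by
      refine ContinuousLinearMap.ext fun w => ?_
      simp [hAdef, hmapp]
    rw [heq] at h3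
    exact h3.congr_of_eventuallyEq (by filter_upwards with w; simp [hΦdef, hmapp])
  have hsup : ∀ x : ℝ, Φ (x, 0) ∈ Set.range γ ×ˢ ({0} : Set ℂ) := by
    intro x
    refine ⟨⟨x + t₀, ?_⟩, rfl⟩
    show γ (x + t₀) = g (x, 0)
    simp [hgdef, add_comm]
  have hloc : ∀ δ > 0, ∀ᶠ z in 𝓝[Set.range γ ×ˢ ({0} : Set ℂ)] (Φ 0),
      ∃ x : ℝ, ‖x‖ < δ ∧ z = Φ (x, 0) := by
    intro δ hδ
    rw [hΦ0]
    have hev := gamma_local γ hsm.continuous hper hinj t₀ δ hδ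
    have hfst : Tendsto (fun z : ℂ × ℂ => z.1)
        (𝓝[Set.range γ ×ˢ ({0} : Set ℂ)] ((γ t₀, 0) : ℂ × ℂ)) (𝓝[Set.range γ] (γ t₀)) := by
      rw [tendsto_nhdsWithin_iff]
      constructor
      · exact (continuous_fst.continuousAt.continuousWithinAt
          (s := Set.range γ ×ˢ ({0} : Set ℂ))).tendsto
      · filter_upwards [self_mem_nhdsWithin] with z hz
        exact hz.1
    filter_upwards [hfst.eventually hev, self_mem_nhdsWithin] with z h1 hz
    obtain ⟨x, hx, he⟩ := h1
    refine ⟨x, hx, ?_⟩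
    have h2 : z.2 = 0 := hz.2
    have : Φ (x, 0) = (γ (t₀ + x), 0) := by
      show (g ((x,(0:ℝ × ℂ)).1, (x,(0:ℝ × ℂ)).2.1), ((0:ℝ × ℂ)).2) = _
      rw [show ((x,(0:ℝ × ℂ)).1, (x,(0:ℝ × ℂ)).2.1) = (x, (0:ℝ)) from rfl]
      simp [hgdef]
    rw [this]
    exact Prod.ext he h2
  have hres := tangentCone_eq_of_chart Φ A hstrict _ hsup hloc
  rw [hΦ0] at hres
  rw [hres]
  ext v
  constructor
  · rintro ⟨x, -, rfl⟩
    refine ⟨x, ?_⟩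
    simp [hAdef]
  · rintro ⟨a, rfl⟩
    refine ⟨a, trivial, ?_⟩
    simp [hAdef]

/-- Let `γ` be a smooth Jordan curve in `ℂ`, `L = l(γ × γ)` with
`l(z,w) = ((z+w)/2, (z−w)/2)`, and for `φ ∈ (0, π/2]` let `L_φ = R_φ(L)` where
`R_φ(z,w) = (z, e^{iφ}w)`. Then `L ∩ (ℂ × {0}) = L_φ ∩ (ℂ × {0}) = γ × {0}`,
and `L` and `L_φ` intersect cleanly along `γ × {0}`: at each `p ∈ γ × {0}`,
`T_pL ∩ T_pL_φ = T_p(γ × {0})` (tangent spaces encoded by tangent cones). -/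
theorem L_and_Lphi_intersect_cleanly
    (γ : ℝ → ℂ)
    (hsm : ContDiff ℝ (⊤ : ℕ∞) γ)
    (hper : Function.Periodic γ (2 * π))
    (hinj : Set.InjOn γ (Set.Ico 0 (2 * π)))
    (himm : ∀ t : ℝ, deriv γ t ≠ 0)
    (φ : ℝ) (hφ : 0 < φ ∧ φ ≤ π / 2)
    (l Rφ : ℂ × ℂ → ℂ × ℂ)
    (hl : ∀ z w : ℂ, l (z, w) = ((z + w) / 2, (z - w) / 2))
    (hR : ∀ z w : ℂ, Rφ (z, w) = (z, Complex.exp (φ * Complex.I) * w))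
    (L Lφ : Set (ℂ × ℂ))
    (hL : L = l '' (Set.range γ ×ˢ Set.range γ))
    (hLφ : Lφ = Rφ '' L) :
    L ∩ {p : ℂ × ℂ | p.2 = 0} = Set.range γ ×ˢ ({0} : Set ℂ) ∧
    Lφ ∩ {p : ℂ × ℂ | p.2 = 0} = Set.range γ ×ˢ ({0} : Set ℂ) ∧
    ∀ p ∈ Set.range γ ×ˢ ({0} : Set ℂ),
      tangentConeAt ℝ L p ∩ tangentConeAt ℝ Lφ p =
        tangentConeAt ℝ (Set.range γ ×ˢ ({0} : Set ℂ)) p := by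
  obtain ⟨hφ1, hφ2⟩ := hφ
  have he : Complex.exp (φ * Complex.I) ≠ 0 := Complex.exp_ne_zero _
  have heim : (Complex.exp (φ * Complex.I)).im = Real.sin φ :=
    Complex.exp_ofReal_mul_I_im φ
  have hsin : 0 < Real.sin φ :=
    Real.sin_pos_of_pos_of_lt_pi hφ1 (lt_of_le_of_lt hφ2 (by linarith [Real.pi_pos]))
  have hlfun : ∀ p : ℂ × ℂ, l p = lCLE p := fun p => by
    rw [show l p = l (p.1, p.2) from rfl, hl p.1 p.2]; rfl
  have hRfun : ∀ p : ℂ × ℂ, Rφ p = rCLE _ he p := fun p => by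
    rw [show Rφ p = Rφ (p.1, p.2) from rfl, hR p.1 p.2]; rfl
  have hLeq : L = lCLE '' (Set.range γ ×ˢ Set.range γ) := by
    rw [hL]; exact Set.image_congr fun p _ => hlfun p
  have hLφeq : Lφ = (lCLE.trans (rCLE _ he)) '' (Set.range γ ×ˢ Set.range γ) := by
    rw [hLφ, hLeq, ← Set.image_comp]
    refine Set.image_congr fun p _ => ?_
    show Rφ (lCLE p) = _
    rw [hRfun (lCLE p)]
    rfl
  refine ⟨?_, ?_, ?_⟩
  · rw [hLeq]; ext z
    constructor
    · rintro ⟨⟨q, hq, rfl⟩, hz2⟩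
      have h2 : ((q.1 - q.2) / 2 : ℂ) = 0 := hz2
      have hq12 : q.1 = q.2 := by
        field_simp at h2
        linear_combination h2
      constructor
      · show (q.1 + q.2) / 2 ∈ Set.range γ
        rw [hq12, add_self_div_two]
        exact hq.2
      · exact hz2
    · rintro ⟨⟨t, ht⟩, hz2⟩
      have hz2' : z.2 = 0 := hz2
      refine ⟨⟨(z.1, z.1), ⟨⟨t, ht⟩, ⟨t, ht⟩⟩, ?_⟩, hz2'⟩
      rw [lCLE_apply]
      exact Prod.ext (add_self_div_two z.1) (by rw [sub_self]; exact (zero_div 2).trans hz2'.symm)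
  · rw [hLφeq]; ext z
    constructor
    · rintro ⟨⟨q, hq, rfl⟩, hz2⟩
      have h2 : Complex.exp (φ * Complex.I) * ((q.1 - q.2) / 2 : ℂ) = 0 := hz2
      have h2' : ((q.1 - q.2) / 2 : ℂ) = 0 := by
        rcases mul_eq_zero.1 h2 with h | h
        · exact absurd h he
        · exact h
      have hq12 : q.1 = q.2 := by
        field_simp at h2'
        linear_combination h2'
      constructor
      · show (q.1 + q.2) / 2 ∈ Set.range γ
        rw [hq12, add_self_div_two]
        exact hq.2
      · exact hz2
    · rintro ⟨⟨t, ht⟩, hz2⟩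
      have hz2' : z.2 = 0 := hz2
      refine ⟨⟨(z.1, z.1), ⟨⟨t, ht⟩, ⟨t, ht⟩⟩, ?_⟩, hz2'⟩
      show (rCLE _ he) (lCLE (z.1, z.1)) = z
      rw [lCLE_apply]
      refine Prod.ext ?_ ?_
      · exact add_self_div_two z.1
      · show Complex.exp (φ * Complex.I) * ((z.1 - z.1) / 2) = z.2
        rw [sub_self, zero_div, mul_zero, hz2']
  · rintro p ⟨⟨t₀, ht₀⟩, hp2⟩
    have hp2' : p.2 = 0 := hp2
    have hpe : p = ((γ t₀ : ℂ), (0 : ℂ)) := Prod.ext ht₀.symm hp2'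
    subst hpe
    have hD := himm t₀
    have hTL := aux_prod γ hsm hper hinj t₀ hD lCLE
    have hTLφ := aux_prod γ hsm hper hinj t₀ hD (lCLE.trans (rCLE _ he))
    have hTd := aux_diag γ hsm hper hinj t₀ hD
    have hpt : lCLE ((γ t₀ : ℂ), (γ t₀ : ℂ)) = ((γ t₀ : ℂ), (0 : ℂ)) := by
      rw [lCLE_apply]
      exact Prod.ext (add_self_div_two _) (by rw [sub_self]; exact zero_div 2)
    have hpt2 : (lCLE.trans (rCLE _ he)) ((γ t₀ : ℂ), (γ t₀ : ℂ)) = ((γ t₀ : ℂ), (0 : ℂ)) := by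
      show (rCLE _ he) (lCLE ((γ t₀ : ℂ), (γ t₀ : ℂ))) = _
      rw [hpt, rCLE_apply, mul_zero]
    rw [hpt] at hTL
    rw [hpt2] at hTLφ
    rw [hLeq, hLφeq, hTL, hTLφ, hTd]
    ext v
    simp only [Set.mem_inter_iff, Set.mem_setOf_eq]
    constructor
    · rintro ⟨⟨a, b, rfl⟩, ⟨a', b', h2⟩⟩
      have h2snd : ((a • deriv γ t₀ - b • deriv γ t₀) / 2 : ℂ) =
          Complex.exp (φ * Complex.I) * ((a' • deriv γ t₀ - b' • deriv γ t₀) / 2) :=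
        congrArg Prod.snd h2
      have key : ((a - b : ℝ) : ℂ) = Complex.exp (φ * Complex.I) * ((a' - b' : ℝ) : ℂ) := by
        apply mul_right_cancel₀ hD
        simp only [Complex.real_smul] at h2snd
        push_cast
        field_simp at h2snd
        linear_combination (deriv γ t₀) * h2snd
      have him := congrArg Complex.im key
      rw [Complex.mul_im] at him
      simp only [Complex.ofReal_im, Complex.ofReal_re, heim, mul_zero, zero_add] at him
      have hab' : (a' - b' : ℝ) = 0 := by
        by_contra hne
        exact hne (by nlinarith [him])
      have hab : (a - b : ℝ) = 0 := by
        rw [hab'] at key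
        have : ((a - b : ℝ) : ℂ) = 0 := by simpa using key
        exact_mod_cast this
      have haeqb : a = b := by linarith
      refine ⟨a, ?_⟩
      rw [lCLE_apply, haeqb]
      exact Prod.ext (add_self_div_two _).symm (by rw [sub_self]; exact (zero_div 2).symm) |>.symm
    · rintro ⟨a, rfl⟩
      constructor
      · refine ⟨a, a, ?_⟩
        rw [lCLE_apply]
        exact Prod.ext (add_self_div_two _).symm (by rw [sub_self]; exact (zero_div 2).symm)
      · refine ⟨a, a, ?_⟩
        show _ = (rCLE _ he) (lCLE _)
        rw [lCLE_apply]
        refine Prod.ext ?_ ?_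
        · exact (add_self_div_two _).symm
        · show (0:ℂ) = Complex.exp (φ * Complex.I) * ((a • deriv γ t₀ - a • deriv γ t₀) / 2)
          rw [sub_self, zero_div, mul_zero]
end

section
/- Let γ be a smooth Jordan curve in ℂ and 0 < φ ≤ π/2. If there exist z ∈ ℂ, r > 0, θ ∈ ℝ such that the point (z, r e^{i(θ+φ)}) lies in both L = l(γ×γ) and L_φ = R_φ(L), then the four points z ± r e^{iθ} and z ± r e^{i(θ+φ)} all lie on γ and form the vertices of a rectangle whose diagonals meet at angle φ. -/
open Complex Real Set

/-- If `(z, r e^{i(θ+φ)})` lies in both `L = l(γ×γ)` and `L_φ = R_φ(L)`, then the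
four points `z ± r e^{iθ}` and `z ± r e^{i(θ+φ)}` all lie on `γ` and form the
vertices of a rectangle whose diagonals meet at angle `φ`. -/
theorem intersection_point_gives_inscribed_rectangle
    (γ : ℝ → ℂ)
    (hsm : ContDiff ℝ (⊤ : ℕ∞) γ)
    (hper : Function.Periodic γ (2 * π))
    (hinj : Set.InjOn γ (Set.Ico 0 (2 * π)))
    (himm : ∀ t : ℝ, deriv γ t ≠ 0)
    (φ : ℝ) (hφ : 0 < φ ∧ φ ≤ π / 2)
    (l Rφ : ℂ × ℂ → ℂ × ℂ)
    (hl : ∀ z w : ℂ, l (z, w) = ((z + w) / 2, (z - w) / 2))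
    (hRφ : ∀ z w : ℂ, Rφ (z, w) = (z, Complex.exp (φ * Complex.I) * w))
    (L Lφ : Set (ℂ × ℂ))
    (hL : L = l '' (Set.range γ ×ˢ Set.range γ))
    (hLφ : Lφ = Rφ '' L)
    (z : ℂ) (r θ : ℝ) (hr : 0 < r)
    (hmem : (z, (r : ℂ) * Complex.exp ((θ + φ) * Complex.I)) ∈ L ∩ Lφ) :
    letI a := z + (r : ℂ) * Complex.exp (θ * Complex.I)
    letI b := z - (r : ℂ) * Complex.exp (θ * Complex.I)
    letI c := z + (r : ℂ) * Complex.exp ((θ + φ) * Complex.I)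
    letI d := z - (r : ℂ) * Complex.exp ((θ + φ) * Complex.I)
    a ∈ Set.range γ ∧ b ∈ Set.range γ ∧ c ∈ Set.range γ ∧ d ∈ Set.range γ ∧
    -- the four points are the vertices of a rectangle:
    a ≠ b ∧ a ≠ c ∧ a ≠ d ∧ b ≠ c ∧ b ≠ d ∧ c ≠ d ∧
    a + b = c + d ∧ ‖a - b‖ = ‖c - d‖ ∧
    -- whose diagonals meet at angle φ:
    c - d = Complex.exp (φ * Complex.I) * (a - b) := by


  obtain ⟨hmL, hmLφ⟩ := hmem
  have hrne : (r : ℂ) ≠ 0 := by exact_mod_cast hr.ne'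
  have hsin : Real.sin φ > 0 := by
    apply Real.sin_pos_of_pos_of_lt_pi hφ.1
    linarith [hφ.2, Real.pi_pos]
  have heφ : Complex.exp (((θ : ℂ) + (φ : ℂ)) * Complex.I)
      = Complex.exp ((θ : ℂ) * Complex.I) * Complex.exp ((φ : ℂ) * Complex.I) := by
    rw [← Complex.exp_add]; ring_nf
  have him : (Complex.exp ((φ : ℂ) * Complex.I)).im = Real.sin φ := by
    simp [Complex.exp_ofReal_mul_I_im]
  have hne1 : Complex.exp ((φ : ℂ) * Complex.I) ≠ 1 := by
    intro h; rw [h] at him; simp at him; linarith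
  have hnem1 : Complex.exp ((φ : ℂ) * Complex.I) ≠ -1 := by
    intro h; rw [h] at him; simp at him; linarith
  rw [hL] at hmL
  obtain ⟨⟨p, q⟩, ⟨hp, hq⟩, heq⟩ := hmL
  rw [hl] at heq
  obtain ⟨h1, h2⟩ := Prod.mk.injEq .. ▸ heq
  have hp' : p = z + (r : ℂ) * Complex.exp (((θ : ℂ) + (φ : ℂ)) * Complex.I) := by
    field_simp at h1 h2
    linear_combination (h1 + h2) / 2
  have hq' : q = z - (r : ℂ) * Complex.exp (((θ : ℂ) + (φ : ℂ)) * Complex.I) := by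
    field_simp at h1 h2
    linear_combination (h1 - h2) / 2
  rw [hLφ, hL] at hmLφ
  obtain ⟨x, ⟨⟨p', q'⟩, ⟨hp2, hq2⟩, hx⟩, hRx⟩ := hmLφ
  rw [hl] at hx
  subst hx
  rw [hRφ] at hRx
  obtain ⟨h3, h4⟩ := Prod.mk.injEq .. ▸ hRx
  have h5 : (p' - q') / 2 = (r : ℂ) * Complex.exp ((θ : ℂ) * Complex.I) := by
    have hene : Complex.exp ((φ : ℂ) * Complex.I) ≠ 0 := Complex.exp_ne_zero _
    rw [heφ] at h4
    have h6 : Complex.exp ((φ : ℂ) * Complex.I) * ((p' - q') / 2)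
        = Complex.exp ((φ : ℂ) * Complex.I) * ((r : ℂ) * Complex.exp ((θ : ℂ) * Complex.I)) := by
      linear_combination h4
    exact mul_left_cancel₀ hene h6
  have hp2' : p' = z + (r : ℂ) * Complex.exp ((θ : ℂ) * Complex.I) := by
    field_simp at h3 h5
    linear_combination (h3 + h5) / 2
  have hq2' : q' = z - (r : ℂ) * Complex.exp ((θ : ℂ) * Complex.I) := by
    field_simp at h3 h5
    linear_combination (h3 - h5) / 2
  subst hp' hq' hp2' hq2'
  refine ⟨hp2, hq2, hp, hq, ?_, ?_, ?_, ?_, ?_, ?_, by ring, ?_,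
    by linear_combination 2 * (r : ℂ) * heφ⟩
  · intro h
    have : (r : ℂ) * Complex.exp ((θ : ℂ) * Complex.I) = 0 := by linear_combination h / 2
    exact (mul_ne_zero hrne (Complex.exp_ne_zero _)) this
  · intro h
    apply hne1
    have h' : (r : ℂ) * Complex.exp ((θ : ℂ) * Complex.I) * 1
        = (r : ℂ) * Complex.exp ((θ : ℂ) * Complex.I) * Complex.exp ((φ : ℂ) * Complex.I) := by
      linear_combination h + (r : ℂ) * heφ
    exact (mul_left_cancel₀ (mul_ne_zero hrne (Complex.exp_ne_zero _)) h').symm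
  · intro h
    apply hnem1
    have h' : (r : ℂ) * Complex.exp ((θ : ℂ) * Complex.I) * (-1)
        = (r : ℂ) * Complex.exp ((θ : ℂ) * Complex.I) * Complex.exp ((φ : ℂ) * Complex.I) := by
      linear_combination -h + (r : ℂ) * heφ
    exact (mul_left_cancel₀ (mul_ne_zero hrne (Complex.exp_ne_zero _)) h').symm
  · intro h
    apply hnem1
    have h' : (r : ℂ) * Complex.exp ((θ : ℂ) * Complex.I) * (-1)
        = (r : ℂ) * Complex.exp ((θ : ℂ) * Complex.I) * Complex.exp ((φ : ℂ) * Complex.I) := by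
      linear_combination h + (r : ℂ) * heφ
    exact (mul_left_cancel₀ (mul_ne_zero hrne (Complex.exp_ne_zero _)) h').symm
  · intro h
    apply hne1
    have h' : (r : ℂ) * Complex.exp ((θ : ℂ) * Complex.I) * 1
        = (r : ℂ) * Complex.exp ((θ : ℂ) * Complex.I) * Complex.exp ((φ : ℂ) * Complex.I) := by
      linear_combination -h + (r : ℂ) * heφ
    exact (mul_left_cancel₀ (mul_ne_zero hrne (Complex.exp_ne_zero _)) h').symm
  · intro h
    have : (r : ℂ) * Complex.exp (((θ : ℂ) + (φ : ℂ)) * Complex.I) = 0 := by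
      linear_combination h / 2
    exact (mul_ne_zero hrne (Complex.exp_ne_zero _)) this
  · have e1 : z + (r : ℂ) * Complex.exp ((θ : ℂ) * Complex.I)
        - (z - (r : ℂ) * Complex.exp ((θ : ℂ) * Complex.I))
        = 2 * (r : ℂ) * Complex.exp ((θ : ℂ) * Complex.I) := by ring
    have e2 : z + (r : ℂ) * Complex.exp (((θ : ℂ) + (φ : ℂ)) * Complex.I)
        - (z - (r : ℂ) * Complex.exp (((θ : ℂ) + (φ : ℂ)) * Complex.I))
        = 2 * (r : ℂ) * Complex.exp (((θ : ℂ) + (φ : ℂ)) * Complex.I) := by ring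
    have ec : ((θ : ℂ) + (φ : ℂ)) = ((θ + φ : ℝ) : ℂ) := by push_cast; ring
    rw [e1, e2, ec, norm_mul, norm_mul, norm_mul, norm_mul,
      Complex.norm_exp_ofReal_mul_I, Complex.norm_exp_ofReal_mul_I]
end

section
/- For a smooth Jordan curve γ : S¹ → ℂ, the map h₁ : Sym²(S¹) → ℂ × ℂ induced by (s,t) ↦ ((γ(s)+γ(t))/2, (γ(s)−γ(t))²) is injective, and the set of interior self-intersections of the pair (im h₁, R_{2φ}(im h₁)), where R_{2φ}(z,w) = (z, e^{2iφ}w), away from γ × {0}, is in bijection with inscribed rectangles in γ of aspect angle φ. -/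
open Complex Real

private lemma sq_eq_cases {x y : ℂ} (h : x ^ 2 = y ^ 2) : x = y ∨ x = -y := by
  have h0 : (x - y) * (x + y) = 0 := by linear_combination h
  rcases mul_eq_zero.mp h0 with h1 | h1
  · exact Or.inl (sub_eq_zero.mp h1)
  · exact Or.inr (eq_neg_of_add_eq_zero_left h1)

private lemma exp_key (r θ φ : ℝ) :
    (2 * (r : ℂ) * Complex.exp ((θ + φ) * Complex.I)) ^ 2 =
      Complex.exp (2 * φ * Complex.I) * (2 * (r : ℂ) * Complex.exp (θ * Complex.I)) ^ 2 := by
  have e1 : ((θ : ℂ) + φ) * Complex.I = θ * Complex.I + φ * Complex.I := by ring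
  have e2 : (2 * (φ : ℂ)) * Complex.I = φ * Complex.I + φ * Complex.I := by ring
  rw [e1, e2, Complex.exp_add, Complex.exp_add]
  ring

/-- Hugelmeyer's map: for a smooth Jordan curve `γ`, the map
`h₁(s,t) = ((γ(s)+γ(t))/2, (γ(s)−γ(t))²)` descends to an injective map on
`Sym²(S¹)`, and the self-intersections of the pair `(im h₁, R_{2φ}(im h₁))`
away from `γ × {0}` are in bijection with inscribed rectangles in `γ` of aspect
angle `φ`: such a self-intersection point determines an inscribed rectangle of
aspect angle `φ`, and conversely every inscribed rectangle of aspect angle `φ`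
arises this way. -/
theorem hugelmeyer_map_self_intersections_are_rectangles
    (γ : ℝ → ℂ)
    (hsm : ContDiff ℝ (⊤ : ℕ∞) γ)
    (hper : Function.Periodic γ (2 * π))
    (hinj : Set.InjOn γ (Set.Ico 0 (2 * π)))
    (himm : ∀ t : ℝ, deriv γ t ≠ 0)
    (φ : ℝ) (hφ : 0 < φ ∧ φ ≤ π / 2)
    (h : ℝ × ℝ → ℂ × ℂ)
    (hh : ∀ s t : ℝ, h (s, t) = ((γ s + γ t) / 2, (γ s - γ t) ^ 2))
    (Rot : ℂ × ℂ → ℂ × ℂ)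
    (hRot : ∀ z w : ℂ, Rot (z, w) = (z, Complex.exp (2 * φ * Complex.I) * w)) :
    -- h₁ is injective as a map on unordered pairs:
    (∀ s t s' t' : ℝ, h (s, t) = h (s', t') →
      (γ s = γ s' ∧ γ t = γ t') ∨ (γ s = γ t' ∧ γ t = γ s')) ∧
    -- each self-intersection away from γ × {0} gives an inscribed rectangle of
    -- aspect angle φ:
    (∀ p : ℂ × ℂ, p ∈ Set.range h ∩ (Rot '' Set.range h) → p.2 ≠ 0 →
      ∃ (z : ℂ) (r θ : ℝ), 0 < r ∧ p.1 = z ∧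
        p.2 = (2 * (r : ℂ) * Complex.exp ((θ + φ) * Complex.I)) ^ 2 ∧
        z + (r : ℂ) * Complex.exp (θ * Complex.I) ∈ Set.range γ ∧
        z - (r : ℂ) * Complex.exp (θ * Complex.I) ∈ Set.range γ ∧
        z + (r : ℂ) * Complex.exp ((θ + φ) * Complex.I) ∈ Set.range γ ∧
        z - (r : ℂ) * Complex.exp ((θ + φ) * Complex.I) ∈ Set.range γ) ∧
    -- and conversely, every inscribed rectangle of aspect angle φ arises from
    -- such a self-intersection:
    (∀ (z : ℂ) (r θ : ℝ), 0 < r →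
      z + (r : ℂ) * Complex.exp (θ * Complex.I) ∈ Set.range γ →
      z - (r : ℂ) * Complex.exp (θ * Complex.I) ∈ Set.range γ →
      z + (r : ℂ) * Complex.exp ((θ + φ) * Complex.I) ∈ Set.range γ →
      z - (r : ℂ) * Complex.exp ((θ + φ) * Complex.I) ∈ Set.range γ →
      ((z, (2 * (r : ℂ) * Complex.exp ((θ + φ) * Complex.I)) ^ 2) ∈
          Set.range h ∩ (Rot '' Set.range h) ∧
        (2 * (r : ℂ) * Complex.exp ((θ + φ) * Complex.I)) ^ 2 ≠ 0)) := by
  refine ⟨?_, ?_, ?_⟩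
  · -- injectivity on unordered pairs
    intro s t s' t' heq
    rw [hh, hh, Prod.mk.injEq] at heq
    obtain ⟨h1, h2⟩ := heq
    rcases sq_eq_cases h2 with h3 | h3
    · exact Or.inl ⟨by linear_combination h1 + h3 / 2, by linear_combination h1 - h3 / 2⟩
    · exact Or.inr ⟨by linear_combination h1 + h3 / 2, by linear_combination h1 - h3 / 2⟩
  · -- self-intersections give rectangles
    rintro p ⟨⟨⟨s, t⟩, hst⟩, ⟨q, ⟨⟨s', t'⟩, hst'⟩, hq⟩⟩ hp2
    rw [hh] at hst
    rw [hh] at hst'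
    subst hst'
    rw [hRot] at hq
    have hp1 : p.1 = (γ s + γ t) / 2 := by rw [← hst]
    have hp2' : p.2 = (γ s - γ t) ^ 2 := by rw [← hst]
    have hq1 : p.1 = (γ s' + γ t') / 2 := by rw [← hq]
    have hq2 : p.2 = Complex.exp (2 * φ * Complex.I) * (γ s' - γ t') ^ 2 := by rw [← hq]
    set u : ℂ := (γ s' - γ t') / 2 with hu
    have h2u : γ s' - γ t' = 2 * u := by rw [hu]; ring
    have hune : u ≠ 0 := by
      intro h0
      apply hp2
      rw [hq2, h2u, h0]
      ring
    set z : ℂ := (γ s' + γ t') / 2 with hz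
    refine ⟨z, ‖u‖, Complex.arg u, norm_pos_iff.mpr hune, hq1, ?_⟩
    have hupolar : (‖u‖ : ℂ) * Complex.exp (Complex.arg u * Complex.I) = u :=
      Complex.norm_mul_exp_arg_mul_I u
    have hs' : γ s' = z + (‖u‖ : ℂ) * Complex.exp (Complex.arg u * Complex.I) := by
      rw [hupolar, hz, hu]; ring
    have ht' : γ t' = z - (‖u‖ : ℂ) * Complex.exp (Complex.arg u * Complex.I) := by
      rw [hupolar, hz, hu]; ring
    have hkey : p.2 =
        (2 * (‖u‖ : ℂ) * Complex.exp ((Complex.arg u + φ) * Complex.I)) ^ 2 := by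
      rw [hq2, h2u, exp_key]
      linear_combination (-4 * Complex.exp (2 * φ * Complex.I) *
        (u + (‖u‖ : ℂ) * Complex.exp (Complex.arg u * Complex.I))) * hupolar
    refine ⟨hkey, ⟨s', hs'⟩, ⟨t', ht'⟩, ?_, ?_⟩ <;>
    · have hsq : (γ s - γ t) ^ 2 =
          (2 * (‖u‖ : ℂ) * Complex.exp ((Complex.arg u + φ) * Complex.I)) ^ 2 := by
        rw [← hp2', hkey]
      have hsum : p.1 = z := hq1
      have hz2 : γ s + γ t = 2 * z := by
        have := hp1.symm.trans hq1
        rw [hz] at this ⊢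
        linear_combination 2 * this
      rcases sq_eq_cases hsq with h3 | h3 <;>
      first
        | exact ⟨s, by linear_combination (hz2 + h3) / 2⟩
        | exact ⟨t, by linear_combination (hz2 - h3) / 2⟩
  · -- converse
    rintro z r θ hr ⟨a, ha⟩ ⟨b, hb⟩ ⟨c, hc⟩ ⟨d, hd⟩
    have hne : (2 * (r : ℂ) * Complex.exp ((θ + φ) * Complex.I)) ^ 2 ≠ 0 := by
      apply pow_ne_zero
      apply mul_ne_zero (mul_ne_zero two_ne_zero _) (Complex.exp_ne_zero _)
      exact_mod_cast ne_of_gt hr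
    refine ⟨⟨⟨(c, d), ?_⟩, ?_⟩, hne⟩
    · rw [hh, hc, hd, Prod.mk.injEq]
      exact ⟨by ring, by ring⟩
    · refine ⟨((γ a + γ b) / 2, (γ a - γ b) ^ 2), ⟨(a, b), (hh a b)⟩, ?_⟩
      rw [hRot, ha, hb, Prod.mk.injEq]
      refine ⟨by ring, ?_⟩
      have e : z + (r : ℂ) * Complex.exp (θ * Complex.I) -
          (z - (r : ℂ) * Complex.exp (θ * Complex.I)) =
          2 * (r : ℂ) * Complex.exp (θ * Complex.I) := by ring
      rw [e]
      exact (exp_key r θ φ).symm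
end
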